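/- arXiv:2408.17369 — 3 statements merged into one kernel-verified Lean document; each statement's English description precedes it below -/
import Mathlib

section
/- Let S be a set of n ≥ 3 points in the plane with distinct y-coordinates, in general position, and let C be a non-crossing monotone Hamiltonian cycle on S, consisting of two y-monotone paths L and R from the lowest point p_s to the highest point p_t, with L to the left of R. Then every point of S on the left envelope of the convex hull of S belongs to L, and every point of S on the right envelope belongs to R. -/
open scoped BigOperators

abbrev Pt : Type := ℝ × ℝ

noncomputable section

/-- Signed cross product: positive iff `b` is strictly left of the directed line `o → a`. -/
def xprod (o a b : Pt) : ℝ := (a.1 - o.1) * (b.2 - o.2) - (a.2 - o.2) * (b.1 - o.1)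

/-- Closed straight-line segment between two points. -/
def Seg (p q : Pt) : Set Pt := segment ℝ p q

/-- Consecutive edges of a polyline given by a list of points. -/
def edgesOf (l : List Pt) : List (Pt × Pt) := l.zip l.tail

/-- The set of points covered by a polyline. -/
def polyPts (l : List Pt) : Set Pt := ⋃ e ∈ edgesOf l, Seg e.1 e.2

/-- A polyline is y-monotone: strictly increasing y-coordinates. -/
def MonoPath (l : List Pt) : Prop := l.Chain' (fun p q => p.2 < q.2)

/-- Two segments do not cross: any common point is an endpoint of both. -/
def SegNC (e f : Pt × Pt) : Prop :=
  ∀ x : Pt, x ∈ Seg e.1 e.2 → x ∈ Seg f.1 f.2 →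
    (x = e.1 ∨ x = e.2) ∧ (x = f.1 ∨ x = f.2)

/-- No two distinct segments among the edges of the two polylines cross. -/
def PolyNC (L R : List Pt) : Prop :=
  ∀ e ∈ edgesOf L ++ edgesOf R, ∀ f ∈ edgesOf L ++ edgesOf R, e ≠ f → SegNC e f

/-- The polyline `L` is (weakly) to the left of `R` at every intermediate height. -/
def LeftOf (L R : List Pt) (ps pt : Pt) : Prop :=
  ∀ p ∈ polyPts L, ∀ q ∈ polyPts R, p.2 = q.2 → ps.2 < p.2 → p.2 < pt.2 → p.1 < q.1

/-- All points of `S` have pairwise distinct y-coordinates. -/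
def DistinctY (S : Finset Pt) : Prop := ∀ p ∈ S, ∀ q ∈ S, p.2 = q.2 → p = q

/-- General position: no three distinct points of `S` are collinear. -/
def GenPos (S : Finset Pt) : Prop :=
  ∀ p ∈ S, ∀ q ∈ S, ∀ r ∈ S, p ≠ q → p ≠ r → q ≠ r → xprod p q r ≠ 0

def IsLowest (S : Finset Pt) (p : Pt) : Prop := p ∈ S ∧ ∀ q ∈ S, q ≠ p → p.2 < q.2

def IsHighest (S : Finset Pt) (p : Pt) : Prop := p ∈ S ∧ ∀ q ∈ S, q ≠ p → q.2 < p.2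

/-- Points of `S` on the boundary of the convex hull of `S`. -/
def hullPts (S : Finset Pt) : Set Pt :=
  {p | p ∈ S ∧ p ∈ frontier (convexHull ℝ (S : Set Pt))}

/-- The left envelope: hull-boundary points of `S` on or to the left of the line `ps pt`. -/
def leftEnvelope (S : Finset Pt) (ps pt : Pt) : Set Pt :=
  {p ∈ hullPts S | 0 ≤ xprod ps pt p}

/-- The right envelope: hull-boundary points of `S` on or to the right of the line `ps pt`. -/
def rightEnvelope (S : Finset Pt) (ps pt : Pt) : Set Pt :=
  {p ∈ hullPts S | xprod ps pt p ≤ 0}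

/-- A non-crossing monotone Hamiltonian cycle on `S`, given by its two monotone
paths `L` and `R` from the lowest point `ps` to the highest point `pt`. -/
structure IsNCMonoHamCycle (S : Finset Pt) (ps pt : Pt) (L R : List Pt) : Prop where
  monoL : MonoPath L
  monoR : MonoPath R
  headL : L.head? = some ps
  headR : R.head? = some ps
  lastL : L.getLast? = some pt
  lastR : R.getLast? = some pt
  nodupL : L.Nodup
  nodupR : R.Nodup
  cover : ∀ p : Pt, p ∈ S ↔ (p ∈ L ∨ p ∈ R)
  shared : ∀ p : Pt, p ∈ L → p ∈ R → p = ps ∨ p = pt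
  noncross : PolyNC L R

/-- An upward planar straight-line embedding of the digraph `(V, E)` on the pointset `S`. -/
structure IsUPSE {V : Type} (E : V → V → Prop) (S : Finset Pt) (f : V → Pt) : Prop where
  bij : Set.BijOn f Set.univ (S : Set Pt)
  upward : ∀ u v : V, E u v → (f u).2 < (f v).2
  planar : ∀ u v w z : V, E u v → E w z → (u, v) ≠ (w, z) → SegNC (f u, f v) (f w, f z)

/-- Undirected reachability in a digraph. -/
def UReach {V : Type} (E : V → V → Prop) (a b : V) : Prop :=
  Relation.ReflTransGen (fun x y => E x y ∨ E y x) a b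

/-- The digraph `E` with the edges of `W` removed. -/
def AvoidW {V : Type} (E : V → V → Prop) (W : Set (V × V)) : V → V → Prop :=
  fun a b => E a b ∧ (a, b) ∉ W

/-- `W` is an st-cutset: removing `W` leaves exactly two undirected components,
one containing `s` and one containing `t`, and every edge of `W` goes from the
`s`-side to the `t`-side. -/
def IsSTCutset {V : Type} (E : V → V → Prop) (s t : V) (W : Set (V × V)) : Prop :=
  (∀ e ∈ W, E e.1 e.2) ∧
  (∀ v : V, UReach (AvoidW E W) s v ∨ UReach (AvoidW E W) t v) ∧
  ¬ UReach (AvoidW E W) s t ∧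
  (∀ e ∈ W, UReach (AvoidW E W) s e.1 ∧ UReach (AvoidW E W) t e.2)

/-- A bipath on `Si`: two non-crossing monotone paths starting at `p1`,
internally disjoint, together covering `Si`, with `L` to the left of `R`. -/
structure IsBipath (Si : Finset Pt) (p1 : Pt) (L R : List Pt) : Prop where
  monoL : MonoPath L
  monoR : MonoPath R
  headL : L.head? = some p1
  headR : R.head? = some p1
  nodupL : L.Nodup
  nodupR : R.Nodup
  cover : ∀ p : Pt, p ∈ Si ↔ (p ∈ L ∨ p ∈ R)
  shared : ∀ p : Pt, p ∈ L → p ∈ R → p = p1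
  noncross : PolyNC L R
  leftOf : ∀ p ∈ polyPts L, ∀ q ∈ polyPts R, p.2 = q.2 → p1.2 < p.2 → p ≠ q → p.1 < q.1

/-- The bipath `(L, R)` on `Si` extends to the non-crossing monotone Hamiltonian
cycle `(L', R')` on `S`, i.e. the restriction of the cycle to `Si` is `(L, R)`. -/
def ExtendsTo (S Si : Finset Pt) (ps pt : Pt) (L R L' R' : List Pt) : Prop :=
  IsNCMonoHamCycle S ps pt L' R' ∧
  L <+: L' ∧ R <+: R' ∧
  (∀ p ∈ L', p ∈ Si ↔ p ∈ L) ∧ (∀ p ∈ R', p ∈ Si ↔ p ∈ R)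

end

/-!
Suppose a point `p` of the left envelope lay on `R`. Then `p` is strictly between the heights of
`ps` and `pt`, so the path `L` passes through a point `q` at the height of `p`, and `q` is to the
left of `p` because `L` is left of `R`. By general position `p` is strictly left of the line
`ps pt`, so `p` lies strictly inside the triangle `q ps pt`, which is contained in the convex hull
of `S`: `p` is not on the hull boundary. The right envelope is the mirror image.
-/

lemma mem_interior_of_inside_triangle {K : Set Pt} (hK : Convex ℝ K) {u v w p : Pt}
    (hu : u ∈ K) (hv : v ∈ K) (hw : w ∈ K)
    (hpu : 0 < xprod v w p * xprod u v w) (hpv : 0 < xprod w u p * xprod u v w)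
    (hpw : 0 < xprod u v p * xprod u v w) :
    p ∈ interior K := by
  set D := xprod u v w with hD
  have hD0 : D ≠ 0 := by rintro h; simp [h] at hpu
  have hcont : ∀ a b : Pt, Continuous fun z : Pt => xprod a b z * D := by
    intro a b; unfold xprod; fun_prop
  have hopen : IsOpen {z : Pt | 0 < xprod v w z * D ∧ 0 < xprod w u z * D ∧
      0 < xprod u v z * D} :=
    (isOpen_lt continuous_const (hcont v w)).inter
      ((isOpen_lt continuous_const (hcont w u)).inter (isOpen_lt continuous_const (hcont u v)))
  refine mem_interior.2 ⟨_, fun z hz => ?_, hopen, hpu, hpv, hpw⟩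
  obtain ⟨hzu, hzv, hzw⟩ := hz
  -- `z` is the convex combination of `u, v, w` with its barycentric coordinates as weights
  have hz : z = ∑ i, ![xprod v w z / D, xprod w u z / D, xprod u v z / D] i • ![u, v, w] i := by
    simp only [Fin.sum_univ_three]
    refine Prod.ext ?_ ?_ <;>
    · simp only [Matrix.cons_val, Prod.fst_add, Prod.snd_add, Prod.smul_fst, Prod.smul_snd,
        smul_eq_mul]
      field_simp
      simp only [hD, xprod]
      ring
  rw [hz]
  refine hK.sum_mem (fun i _ => ?_) ?_ (fun i _ => ?_)
  · fin_cases i <;> exact (div_pos_iff.2 (mul_pos_iff.1 ‹_›)).le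
  · simp only [Fin.sum_univ_three, Matrix.cons_val]
    field_simp
    simp only [hD, xprod]
    ring
  · fin_cases i <;> assumption

lemma exists_mem_segment_snd_eq {a b : Pt} {h : ℝ} (ha : a.2 ≤ h) (hb : h ≤ b.2) :
    ∃ z ∈ segment ℝ a b, z.2 = h := by
  rw [segment_eq_image_lineMap]
  obtain ⟨t, ht, hth⟩ := intermediate_value_Icc zero_le_one
    (f := fun t : ℝ => (AffineMap.lineMap a b t : Pt).2)
    (continuous_snd.comp AffineMap.lineMap_continuous).continuousOn
    (by simpa using And.intro ha hb)
  exact ⟨_, ⟨t, ht, rfl⟩, hth⟩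

-- `p` lies strictly inside the triangle `q a b`.
lemma mem_interior_of_level_opposite_line {K : Set Pt} (hK : Convex ℝ K) {a b q p : Pt}
    (ha : a ∈ K) (hb : b ∈ K) (hq : q ∈ K) (hqp : q.2 = p.2)
    (hap : a.2 < p.2) (hpb : p.2 < b.2)
    (hside : 0 < xprod a b p * (p.1 - q.1)) :
    p ∈ interior K := by
  obtain ⟨qx, qy⟩ := q
  obtain rfl : qy = p.2 := hqp
  set X := xprod a b p
  set d := p.1 - qx
  have hD : xprod (qx, p.2) a b = X + (b.2 - a.2) * d := by simp only [X, d, xprod]; ring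
  have hDd : 0 < d * (X + (b.2 - a.2) * d) := by nlinarith [sq_nonneg d]
  apply mem_interior_of_inside_triangle hK hq ha hb <;> rw [hD]
  · nlinarith [sq_nonneg X]
  · have : xprod b (qx, p.2) p = (b.2 - p.2) * d := by simp only [d, xprod]; ring
    rw [this]; nlinarith
  · have : xprod (qx, p.2) a p = (p.2 - a.2) * d := by simp only [d, xprod]; ring
    rw [this]; nlinarith

lemma edgesOf_cons_cons (a b : Pt) (l : List Pt) :
    edgesOf (a :: b :: l) = (a, b) :: edgesOf (b :: l) := rfl

lemma mem_polyPts_iff {l : List Pt} {x : Pt} :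
    x ∈ polyPts l ↔ ∃ e ∈ edgesOf l, x ∈ Seg e.1 e.2 := by
  simp [polyPts]

lemma polyPts_subset_cons (a : Pt) (l : List Pt) : polyPts l ⊆ polyPts (a :: l) := by
  intro z hz
  obtain ⟨e, he, hze⟩ := mem_polyPts_iff.1 hz
  cases l with
  | nil => simp [edgesOf] at he
  | cons b l => exact mem_polyPts_iff.2 ⟨e, by simp [edgesOf_cons_cons, he], hze⟩

lemma mem_polyPts_of_mem {l : List Pt} {x y : Pt} (hx : x ∈ l) (hy : y ∈ l) (hxy : x ≠ y) :
    x ∈ polyPts l := by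
  induction l generalizing y with
  | nil => simp at hx
  | cons a l ih =>
    cases l with
    | nil => simp only [List.mem_singleton] at hx hy; exact absurd (hx.trans hy.symm) hxy
    | cons b l =>
      rcases List.mem_cons.1 hx with rfl | hx
      · exact mem_polyPts_iff.2 ⟨(x, b), by simp [edgesOf_cons_cons], left_mem_segment ℝ x b⟩
      · by_cases hxb : x = b
        · subst hxb
          exact mem_polyPts_iff.2
            ⟨(a, x), by simp [edgesOf_cons_cons], right_mem_segment ℝ a x⟩
        · exact polyPts_subset_cons a _ (ih hx List.mem_cons_self hxb)

lemma polyPts_subset_of_forall_mem {l : List Pt} {K : Set Pt} (hK : Convex ℝ K)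
    (hl : ∀ x ∈ l, x ∈ K) : polyPts l ⊆ K := by
  intro z hz
  obtain ⟨e, he, hze⟩ := mem_polyPts_iff.1 hz
  exact hK.segment_subset (hl _ (List.of_mem_zip he).1)
    (hl _ (List.tail_subset l (List.of_mem_zip he).2)) hze

lemma exists_mem_polyPts_snd_eq {l : List Pt} {a b : Pt} (ha : l.head? = some a)
    (hb : l.getLast? = some b) (hab : a ≠ b) {h : ℝ} (hah : a.2 ≤ h) (hhb : h ≤ b.2) :
    ∃ q ∈ polyPts l, q.2 = h := by
  induction l generalizing a with
  | nil => simp at ha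
  | cons x l ih =>
    obtain rfl : x = a := by simpa using ha
    cases l with
    | nil => exact absurd (by simpa using hb) hab
    | cons y l =>
      by_cases hhy : h ≤ y.2
      · obtain ⟨z, hz, hzh⟩ := exists_mem_segment_snd_eq hah hhy
        exact ⟨z, mem_polyPts_iff.2 ⟨(x, y), by simp [edgesOf_cons_cons], hz⟩, hzh⟩
      · push Not at hhy
        rw [List.getLast?_cons_cons] at hb
        obtain ⟨q, hq, hqh⟩ := ih rfl hb (by rintro rfl; linarith) hhy.le
        exact ⟨q, polyPts_subset_cons x _ hq, hqh⟩

lemma PolyNC.symm {L R : List Pt} (h : PolyNC L R) : PolyNC R L := by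
  intro e he f hf hef
  simp only [List.mem_append, or_comm] at he hf
  exact h e (List.mem_append.2 he) f (List.mem_append.2 hf) hef

namespace IsNCMonoHamCycle

variable {S : Finset Pt} {ps pt : Pt} {L R : List Pt}

lemma symm (hC : IsNCMonoHamCycle S ps pt L R) : IsNCMonoHamCycle S ps pt R L where
  monoL := hC.monoR
  monoR := hC.monoL
  headL := hC.headR
  headR := hC.headL
  lastL := hC.lastR
  lastR := hC.lastL
  nodupL := hC.nodupR
  nodupR := hC.nodupL
  cover p := (hC.cover p).trans or_comm
  shared p hR hL := hC.shared p hL hR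
  noncross := hC.noncross.symm

/-- For `σ = 1` this is the left-envelope half of the theorem; `σ = -1`, applied to the cycle with
`L` and `R` swapped, gives the right-envelope half. -/
lemma mem_left_of_mem_hullPts (hC : IsNCMonoHamCycle S ps pt L R) (hgp : GenPos S)
    (hs : IsLowest S ps) (ht : IsHighest S pt) (σ : ℝ)
    (hLR : ∀ q ∈ polyPts L, ∀ r ∈ polyPts R, q.2 = r.2 → ps.2 < q.2 → q.2 < pt.2 →
      0 < σ * (r.1 - q.1))
    {p : Pt} (hp : p ∈ hullPts S) (hσp : 0 ≤ σ * xprod ps pt p) : p ∈ L := by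
  by_contra hpL
  obtain ⟨hpS, hp_frontier⟩ := hp
  have hpR : p ∈ R := ((hC.cover p).1 hpS).resolve_left hpL
  have hpsL : ps ∈ L := List.mem_of_mem_head? hC.headL
  have hptL : pt ∈ L := List.mem_of_mem_getLast? hC.lastL
  have hpps : p ≠ ps := by rintro rfl; exact hpL hpsL
  have hppt : p ≠ pt := by rintro rfl; exact hpL hptL
  have hsp : ps.2 < p.2 := hs.2 p hpS hpps
  have hpt : p.2 < pt.2 := ht.2 p hpS hppt
  obtain ⟨q, hqL, hqp⟩ := exists_mem_polyPts_snd_eq hC.headL hC.lastL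
    (by rintro rfl; linarith) hsp.le hpt.le
  have hpq : 0 < σ * (p.1 - q.1) :=
    hLR q hqL p (mem_polyPts_of_mem hpR (List.mem_of_mem_head? hC.headR) hpps) hqp
      (hqp ▸ hsp) (hqp ▸ hpt)
  have hx : xprod ps pt p ≠ 0 :=
    hgp ps hs.1 pt ht.1 p hpS (by rintro rfl; linarith) hpps.symm hppt.symm
  have hσx : 0 < σ * xprod ps pt p :=
    hσp.lt_of_ne (mul_ne_zero (left_ne_zero_of_mul hpq.ne') hx).symm
  have hside : 0 < xprod ps pt p * (p.1 - q.1) := by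
    have := mul_pos hσx hpq
    nlinarith [sq_nonneg σ]
  have hK : Convex ℝ (convexHull ℝ (S : Set Pt)) := convex_convexHull ℝ _
  have hSK : ∀ x ∈ S, x ∈ convexHull ℝ (S : Set Pt) :=
    fun _ hx => subset_convexHull ℝ _ hx
  exact hp_frontier.2 <| mem_interior_of_level_opposite_line hK (hSK ps hs.1) (hSK pt ht.1)
    (polyPts_subset_of_forall_mem hK (fun x hx => hSK x ((hC.cover x).2 (.inl hx))) hqL)
    hqp hsp hpt hside

end IsNCMonoHamCycle

theorem stmt_1_general (S : Finset Pt)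
    (hgp : GenPos S)
    (ps pt : Pt) (hs : IsLowest S ps) (ht : IsHighest S pt)
    (L R : List Pt) (hC : IsNCMonoHamCycle S ps pt L R) (hLR : LeftOf L R ps pt) :
    (∀ p ∈ leftEnvelope S ps pt, p ∈ L) ∧ (∀ p ∈ rightEnvelope S ps pt, p ∈ R) := by
  refine ⟨fun p hp => hC.mem_left_of_mem_hullPts hgp hs ht 1 ?_ hp.1 (by simpa using hp.2),
    fun p hp => hC.symm.mem_left_of_mem_hullPts hgp hs ht (-1) ?_ hp.1 (by simpa using hp.2)⟩
  · intro q hq r hr hqr hsq hqt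
    simpa using hLR q hq r hr hqr hsq hqt
  · intro q hq r hr hqr hsq hqt
    have := hLR r hr q hq hqr.symm (hqr ▸ hsq) (hqr ▸ hqt)
    linarith

/-- in a non-crossing monotone Hamiltonian cycle with `L` to the
left of `R`, the left envelope is contained in `L` and the right envelope in `R`. -/
theorem stmt_1 (S : Finset Pt) (hcard : 3 ≤ S.card)
    (hy : DistinctY S) (hgp : GenPos S)
    (ps pt : Pt) (hs : IsLowest S ps) (ht : IsHighest S pt)
    (L R : List Pt) (hC : IsNCMonoHamCycle S ps pt L R) (hLR : LeftOf L R ps pt) :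
    (∀ p ∈ leftEnvelope S ps pt, p ∈ L) ∧ (∀ p ∈ rightEnvelope S ps pt, p ∈ R) :=
  stmt_1_general S hgp ps pt hs ht L R hC hLR
end

section
/- Let G be a planar st-graph (a finite acyclic digraph with unique source s and unique sink t), let W be an st-cutset of G defining components C_s (containing s) and C_t (containing t), let v be a vertex that is the tail of at least one edge of W, such that every edge of G outgoing from v belongs to W. Let H be the set obtained from W by removing all edges with tail v and adding all edges of G with head v. Then H is also an st-cutset of G. -/
open scoped BigOperators

/-!
Removing the out-edges of `v` from `W` and adding its in-edges moves `v` from the `s`-side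
to the `t`-side and changes nothing else. The `t`-side never meets `v`, so it survives.
For the `s`-side, every vertex `x ≠ s` of `C_s` has an in-edge `(u, x) ∉ W` (otherwise `x` would
lie on the `t`-side), with `u ≠ v` because all out-edges of `v` are in `W`; since `G` is finite
and acyclic, following such in-edges reaches the unique source `s` without passing through `v`.
-/

variable {V : Type} {E : V → V → Prop}

theorem UReach.symm {a b : V} (h : UReach E a b) : UReach E b a :=
  haveI : Std.Symm fun x y : V => E x y ∨ E y x := ⟨fun _ _ hxy => hxy.symm⟩
  Std.Symm.symm (r := Relation.ReflTransGen fun x y => E x y ∨ E y x) _ _ h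

theorem UReach.closed {S : V → Prop} {a b : V} (hS : ∀ x y, S x → E x y ∨ E y x → S y)
    (ha : S a) (h : UReach E a b) : S b := by
  induction h with
  | refl => exact ha
  | tail _ hxy ih => exact hS _ _ ih hxy

theorem UReach.mono_on {F : V → V → Prop} {S : V → Prop} {a b : V}
    (hS : ∀ y, UReach E a y → S y) (hEF : ∀ x y, S x → S y → E x y → F x y)
    (h : UReach E a b) : UReach F a b := by
  induction h with
  | refl => exact .refl
  | @tail x y hax hxy ih =>
    have hx := hS x hax
    have hy := hS y (hax.tail hxy)
    exact ih.tail (hxy.imp (hEF x y hx hy) (hEF y x hy hx))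

theorem wellFounded_of_not_transGen_self [Finite V] (h : ∀ v, ¬ Relation.TransGen E v v) :
    WellFounded E :=
  haveI : Std.Irrefl (Relation.TransGen E) := ⟨h⟩
  (Finite.wellFounded_of_trans_of_irrefl (Relation.TransGen E)).mono
    fun _ _ => Relation.TransGen.single

theorem IsSTCutset.not_reach_both {s t x : V} {W : Set (V × V)} (hW : IsSTCutset E s t W)
    (hs : UReach (AvoidW E W) s x) (ht : UReach (AvoidW E W) t x) : False :=
  hW.2.2.1 (hs.trans ht.symm)

def moveToTSide (E : V → V → Prop) (W : Set (V × V)) (v : V) : Set (V × V) :=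
  (W \ {e | e.1 = v}) ∪ {e | E e.1 e.2 ∧ e.2 = v}

section moveToTSide

variable {W : Set (V × V)} {s t v : V}

theorem avoidW_moveToTSide {a b : V} (h : AvoidW E W a b) (hb : b ≠ v) :
    AvoidW E (moveToTSide E W v) a b :=
  ⟨h.1, by rintro (⟨hab, -⟩ | ⟨-, rfl⟩); exacts [h.2 hab, hb rfl]⟩

theorem AvoidW.of_moveToTSide {a b : V} (h : AvoidW E (moveToTSide E W v) a b) (ha : a ≠ v) :
    AvoidW E W a b ∧ b ≠ v :=
  ⟨⟨h.1, fun hab => h.2 (Or.inl ⟨hab, ha⟩)⟩, fun hb => h.2 (Or.inr ⟨h.1, hb⟩)⟩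

theorem reach_t_moveToTSide (hW : IsSTCutset E s t W) (hsv : UReach (AvoidW E W) s v) {x : V}
    (hx : UReach (AvoidW E W) t x) : UReach (AvoidW E (moveToTSide E W v)) t x :=
  hx.mono_on (S := (· ≠ v)) (fun _ hy hyv => hW.not_reach_both (hyv ▸ hsv) hy)
    fun _ _ _ hy h => avoidW_moveToTSide h hy

theorem reach_t_self_moveToTSide {w : V} (hvv : ¬ E v v) (hW : IsSTCutset E s t W)
    (hvw : (v, w) ∈ W) : UReach (AvoidW E (moveToTSide E W v)) t v := by
  have hw := reach_t_moveToTSide hW (hW.2.2.2 _ hvw).1 (hW.2.2.2 _ hvw).2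
  have hE : E v w := hW.1 _ hvw
  refine hw.tail (Or.inr ⟨hE, ?_⟩)
  rintro (⟨-, h⟩ | ⟨-, h : w = v⟩)
  exacts [h rfl, hvv (h ▸ hE)]

theorem reach_s_moveToTSide (hwf : WellFounded E)
    (hsrc : ∀ v : V, (∀ u, ¬ E u v) → v = s) (hW : IsSTCutset E s t W)
    (hout : ∀ u : V, E v u → (v, u) ∈ W) {x : V} (hx : UReach (AvoidW E W) s x)
    (hxv : x ≠ v) :
    UReach (AvoidW E (moveToTSide E W v)) s x := by
  induction x using hwf.induction with
  | _ x ih =>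
  rcases eq_or_ne x s with rfl | hxs
  · exact .refl
  obtain ⟨u, hux⟩ : ∃ u, E u x := by
    by_contra! h
    exact hxs (hsrc x h)
  have huxW : (u, x) ∉ W := fun h => hW.not_reach_both hx (hW.2.2.2 _ h).2
  have huv : u ≠ v := by
    rintro rfl
    exact huxW (hout x hux)
  have hu := ih u hux (hx.tail (Or.inr ⟨hux, huxW⟩)) huv
  exact hu.tail (Or.inl (avoidW_moveToTSide ⟨hux, huxW⟩ hxv))

theorem reach_s_of_reach_s_moveToTSide (hW : IsSTCutset E s t W) (hvs : v ≠ s)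
    (hout : ∀ u : V, E v u → (v, u) ∈ W) {x : V}
    (hx : UReach (AvoidW E (moveToTSide E W v)) s x) : UReach (AvoidW E W) s x ∧ x ≠ v := by
  refine hx.closed (S := fun y => UReach (AvoidW E W) s y ∧ y ≠ v) ?_ ⟨.refl, hvs.symm⟩
  rintro y z ⟨hy, hyv⟩ (h | h)
  · obtain ⟨h, hzv⟩ := h.of_moveToTSide hyv
    exact ⟨hy.tail (Or.inl h), hzv⟩
  · rcases eq_or_ne z v with rfl | hzv
    · exact (hW.not_reach_both hy (hW.2.2.2 _ (hout y h.1)).2).elim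
    · exact ⟨hy.tail (Or.inr (h.of_moveToTSide hzv).1), hzv⟩

end moveToTSide

theorem stmt_2_general {V : Type} [Fintype V] (E : V → V → Prop) (s t : V)
    (hacyc : ∀ v : V, ¬ Relation.TransGen E v v)
    (hsrc : ∀ v : V, (∀ u, ¬ E u v) → v = s)
    (W : Set (V × V)) (hW : IsSTCutset E s t W)
    (v : V) (hvs : v ≠ s)
    (hvtail : ∃ e ∈ W, e.1 = v)
    (hout : ∀ u : V, E v u → (v, u) ∈ W)
    (hin : ∀ u : V, E u v → UReach (AvoidW E W) s u) :
    IsSTCutset E s t ((W \ {e : V × V | e.1 = v}) ∪ {e : V × V | E e.1 e.2 ∧ e.2 = v}) := by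
  obtain ⟨w, hvw⟩ : ∃ w, (v, w) ∈ W := by
    obtain ⟨⟨_, w⟩, hvw, rfl⟩ := hvtail
    exact ⟨w, hvw⟩
  have hvv : ¬ E v v := fun h => hacyc v (.single h)
  have hsv : UReach (AvoidW E W) s v := (hW.2.2.2 _ hvw).1
  have htv := reach_t_self_moveToTSide hvv hW hvw
  have hs := fun x =>
    reach_s_moveToTSide (x := x) (wellFounded_of_not_transGen_self hacyc) hsrc hW hout
  have ht := fun x => reach_t_moveToTSide (x := x) hW hsv
  refine ⟨?_, fun x => ?_, fun hst => ?_, ?_⟩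
  · rintro e (⟨he, -⟩ | ⟨he, -⟩)
    exacts [hW.1 e he, he]
  · rcases hW.2.1 x with hx | hx
    · rcases eq_or_ne x v with rfl | hxv
      exacts [Or.inr htv, Or.inl (hs x hx hxv)]
    · exact Or.inr (ht x hx)
  · exact hW.2.2.1 (reach_s_of_reach_s_moveToTSide hW hvs hout hst).1
  · rintro ⟨a, b⟩ (⟨hab, hav⟩ | ⟨hab, rfl⟩)
    · exact ⟨hs a (hW.2.2.2 _ hab).1 hav, ht b (hW.2.2.2 _ hab).2⟩
    · exact ⟨hs a (hin a hab) (by rintro rfl; exact hvv hab), htv⟩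

/-- replacing, in an st-cutset `W`, the edges outgoing from a
suitable vertex `v` by the edges incoming into `v` yields another st-cutset. -/
theorem stmt_2 {V : Type} [Fintype V] (E : V → V → Prop) (s t : V)
    (hacyc : ∀ v : V, ¬ Relation.TransGen E v v)
    (hsrc : ∀ v : V, (∀ u, ¬ E u v) → v = s)
    (hsink : ∀ v : V, (∀ u, ¬ E v u) → v = t)
    (W : Set (V × V)) (hW : IsSTCutset E s t W)
    (v : V) (hvs : v ≠ s)
    (hvtail : ∃ e ∈ W, e.1 = v)
    (hout : ∀ u : V, E v u → (v, u) ∈ W)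
    (hin : ∀ u : V, E u v → UReach (AvoidW E W) s u) :
    IsSTCutset E s t ((W \ {e : V × V | e.1 = v}) ∪ {e : V × V | E e.1 e.2 ∧ e.2 = v}) :=
  stmt_2_general E s t hacyc hsrc W hW v hvs hvtail hout hin
end

section
/- Let S be a finite set of points in the plane with distinct y-coordinates, let p_s be the lowest and p_t the highest point of S. Suppose every point of S other than p_s and p_t lies strictly to the right of the line through p_s and p_t. Let R be the right-envelope path of S (the points of S on the right part of the convex hull boundary, from p_s to p_t, in increasing y-order) and let L be the path from p_s to p_t visiting all points of S not on the right envelope, in increasing y-order. Then the union of L and R is a non-crossing monotone Hamiltonian cycle on S. -/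
open scoped BigOperators

/-
Every edge `(c, d)` of the right envelope `R` supports the hull: all of `S` lies weakly to the
left of `c → d`. Otherwise a point `m` of `S` furthest to the right of that line is a hull point,
so it lies on `R`, below `c` or above `d`; in the first case `c` lies strictly inside the triangle
spanned by `p_s`, `p_t` and the point of `[m, d]` at the height of `c` (symmetrically for `d`),
contradicting that `c` is on the hull boundary. An edge of `L` can therefore meet an edge of `R`
only at a point of `L` on that supporting line, which is a hull point and hence `p_s` or `p_t`,
or along the chord `p_s p_t` itself, which all other points of `S` avoid. Two edges of one
monotone path are separated by height.
-/

lemma xprod_swap (o p q : Pt) : xprod p o q = -xprod o p q := by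
  unfold xprod; ring

lemma xprod_rotate (o p q : Pt) : xprod p q o = xprod o p q := by
  unfold xprod; ring

lemma xprod_add_smul (o p x y : Pt) {u v : ℝ} (huv : u + v = 1) :
    xprod o p (u • x + v • y) = u * xprod o p x + v * xprod o p y := by
  obtain rfl : u = 1 - v := by linarith
  simp only [xprod, Prod.fst_add, Prod.snd_add, Prod.smul_fst, Prod.smul_snd, smul_eq_mul]
  ring

lemma xprod_eq_zero_of_mem_Seg {o p x : Pt} (hx : x ∈ Seg o p) : xprod o p x = 0 := by
  obtain ⟨u, v, -, -, huv, rfl⟩ := hx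
  rw [xprod_add_smul o p o p huv]
  simp only [xprod]
  ring

lemma xprod_eq_zero_of_mem_openSegment {o p a b x : Pt} (hx : x ∈ openSegment ℝ a b)
    (ha : 0 ≤ xprod o p a) (hb : 0 ≤ xprod o p b) (hx0 : xprod o p x = 0) :
    xprod o p a = 0 ∧ xprod o p b = 0 := by
  obtain ⟨u, v, hu, hv, huv, rfl⟩ := hx
  rw [xprod_add_smul o p a b huv] at hx0
  constructor <;> nlinarith [mul_nonneg hu.le ha, mul_nonneg hv.le hb]

lemma eq_or_eq_or_mem_openSegment_of_mem_Seg {a b x : Pt} (hx : x ∈ Seg a b) :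
    x = a ∨ x = b ∨ x ∈ openSegment ℝ a b := by
  rwa [Seg, ← insert_endpoints_openSegment] at hx

lemma snd_mem_Ioo_of_mem_openSegment {a b x : Pt} (hab : a.2 < b.2)
    (hx : x ∈ openSegment ℝ a b) : a.2 < x.2 ∧ x.2 < b.2 := by
  obtain ⟨u, v, hu, hv, huv, rfl⟩ := hx
  simp only [Prod.snd_add, Prod.smul_snd, smul_eq_mul]
  obtain rfl : u = 1 - v := by linarith
  constructor <;> nlinarith

lemma eq_or_eq_of_mem_Seg {a b x : Pt} (hx : x ∈ Seg a b) (hab : a.2 < b.2)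
    (hxab : x.2 ≤ a.2 ∨ b.2 ≤ x.2) : x = a ∨ x = b := by
  rcases eq_or_eq_or_mem_openSegment_of_mem_Seg hx with h | h | h
  · exact Or.inl h
  · exact Or.inr h
  · have := snd_mem_Ioo_of_mem_openSegment hab h
    rcases hxab with h' | h' <;> linarith [this.1, this.2]

lemma snd_mem_Icc_of_mem_Seg {a b x : Pt} (hx : x ∈ Seg a b) (hab : a.2 < b.2) :
    a.2 ≤ x.2 ∧ x.2 ≤ b.2 := by
  rcases eq_or_eq_or_mem_openSegment_of_mem_Seg hx with rfl | rfl | h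
  · exact ⟨le_rfl, hab.le⟩
  · exact ⟨hab.le, le_rfl⟩
  · exact (snd_mem_Ioo_of_mem_openSegment hab h).imp le_of_lt le_of_lt

lemma SegNC.symm {e f : Pt × Pt} (h : SegNC e f) : SegNC f e :=
  fun x hf he => (h x he hf).symm

lemma IsLowest.snd_le {S : Finset Pt} {p q : Pt} (hp : IsLowest S p) (hq : q ∈ S) :
    p.2 ≤ q.2 := by
  rcases eq_or_ne q p with rfl | h
  · rfl
  · exact (hp.2 q hq h).le

lemma IsHighest.snd_le {S : Finset Pt} {p q : Pt} (hp : IsHighest S p) (hq : q ∈ S) :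
    q.2 ≤ p.2 := by
  rcases eq_or_ne q p with rfl | h
  · rfl
  · exact (hp.2 q hq h).le

lemma eq_and_eq_of_snd_lt {ps pt a b : Pt} (hst : ps.2 ≤ pt.2) (ha : a = ps ∨ a = pt)
    (hb : b = ps ∨ b = pt) (hab : a.2 < b.2) : a = ps ∧ b = pt := by
  rcases ha with rfl | rfl <;> rcases hb with rfl | rfl
  all_goals first | exact ⟨rfl, rfl⟩ | exact absurd hab (by linarith)

lemma mem_edgesOf {l : List Pt} {e : Pt × Pt} :
    e ∈ edgesOf l ↔ ∃ (i : ℕ) (h : i + 1 < l.length), e = (l[i], l[i + 1]) := by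
  simp only [edgesOf, List.mem_iff_getElem, List.length_zip, List.length_tail, List.getElem_zip,
    List.getElem_tail]
  constructor
  · rintro ⟨i, hi, rfl⟩; exact ⟨i, by omega, rfl⟩
  · rintro ⟨i, hi, rfl⟩; exact ⟨i, by omega, rfl⟩

lemma mem_of_mem_edgesOf {l : List Pt} {e : Pt × Pt} (he : e ∈ edgesOf l) :
    e.1 ∈ l ∧ e.2 ∈ l := by
  obtain ⟨i, hi, rfl⟩ := mem_edgesOf.1 he
  exact ⟨List.getElem_mem _, List.getElem_mem _⟩

namespace MonoPath

variable {l : List Pt}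

lemma snd_lt (hl : MonoPath l) {i j : ℕ} (hij : i < j) (hj : j < l.length) :
    l[i].2 < l[j].2 :=
  List.pairwise_iff_getElem.1 (List.isChain_iff_pairwise.1 hl) i j (by omega) hj hij

lemma snd_le (hl : MonoPath l) {i j : ℕ} (hij : i ≤ j) (hj : j < l.length) :
    l[i].2 ≤ l[j].2 := by
  rcases hij.eq_or_lt with rfl | hij
  · rfl
  · exact (hl.snd_lt hij hj).le

lemma snd_lt_of_mem_edgesOf (hl : MonoPath l) {e : Pt × Pt} (he : e ∈ edgesOf l) :
    e.1.2 < e.2.2 := by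
  obtain ⟨i, hi, rfl⟩ := mem_edgesOf.1 he
  exact hl.snd_lt (Nat.lt_succ_self i) hi

lemma snd_lt_or_lt_of_mem_edgesOf (hl : MonoPath l) {e : Pt × Pt} (he : e ∈ edgesOf l)
    {u : Pt} (hu : u ∈ l) (hu₁ : u ≠ e.1) (hu₂ : u ≠ e.2) : u.2 < e.1.2 ∨ e.2.2 < u.2 := by
  obtain ⟨i, hi, rfl⟩ := mem_edgesOf.1 he
  obtain ⟨j, hj, rfl⟩ := List.getElem_of_mem hu
  rcases lt_trichotomy j i with hji | rfl | hij
  · exact Or.inl (hl.snd_lt hji (by omega))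
  · exact absurd rfl hu₁
  · obtain rfl | h := (Nat.succ_le_of_lt hij).eq_or_lt
    · exact absurd rfl hu₂
    · exact Or.inr (hl.snd_lt h hj)

lemma edges_separated (hl : MonoPath l) {e f : Pt × Pt} (he : e ∈ edgesOf l)
    (hf : f ∈ edgesOf l) (hef : e ≠ f) : e.2.2 ≤ f.1.2 ∨ f.2.2 ≤ e.1.2 := by
  obtain ⟨i, hi, rfl⟩ := mem_edgesOf.1 he
  obtain ⟨j, hj, rfl⟩ := mem_edgesOf.1 hf
  rcases lt_trichotomy i j with hij | rfl | hji
  · exact Or.inl (hl.snd_le hij (by omega))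
  · exact absurd rfl hef
  · exact Or.inr (hl.snd_le hji (by omega))

lemma segNC (hl : MonoPath l) {e f : Pt × Pt} (he : e ∈ edgesOf l)
    (hf : f ∈ edgesOf l) (hef : e ≠ f) : SegNC e f := by
  intro x hxe hxf
  have he' := hl.snd_lt_of_mem_edgesOf he
  have hf' := hl.snd_lt_of_mem_edgesOf hf
  have hxe' := snd_mem_Icc_of_mem_Seg hxe he'
  have hxf' := snd_mem_Icc_of_mem_Seg hxf hf'
  rcases hl.edges_separated he hf hef with h | h
  · exact ⟨eq_or_eq_of_mem_Seg hxe he' (by right; linarith),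
      eq_or_eq_of_mem_Seg hxf hf' (by left; linarith)⟩
  · exact ⟨eq_or_eq_of_mem_Seg hxe he' (by left; linarith),
      eq_or_eq_of_mem_Seg hxf hf' (by right; linarith)⟩

end MonoPath

open Filter Topology in
lemma notMem_interior_of_forall_xprod_le {C : Set Pt} {o p q : Pt} (hop : o ≠ p)
    (hC : ∀ x ∈ C, xprod o p q ≤ xprod o p x) : q ∉ interior C := by
  intro hq
  set w : Pt := (p.2 - o.2, -(p.1 - o.1))
  have hnear : ∀ᶠ t in 𝓝 (0 : ℝ), q + t • w ∈ C := by
    have hcont := (show Continuous fun t : ℝ => q + t • w by fun_prop).tendsto 0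
    rw [zero_smul, add_zero] at hcont
    exact hcont (mem_interior_iff_mem_nhds.1 hq)
  obtain ⟨t, htC, ht⟩ :=
    ((hnear.filter_mono nhdsWithin_le_nhds).and (self_mem_nhdsWithin (s := Set.Ioi 0))).exists
  have hdescent : xprod o p (q + t • w) =
      xprod o p q - t * ((p.1 - o.1) ^ 2 + (p.2 - o.2) ^ 2) := by
    simp only [xprod, w, Prod.fst_add, Prod.snd_add, Prod.smul_fst, Prod.smul_snd, smul_eq_mul]
    ring
  have hpos : 0 < (p.1 - o.1) ^ 2 + (p.2 - o.2) ^ 2 := by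
    by_contra! h
    exact hop (Prod.ext (by nlinarith [sq_nonneg (p.1 - o.1), sq_nonneg (p.2 - o.2)])
      (by nlinarith [sq_nonneg (p.1 - o.1), sq_nonneg (p.2 - o.2)]))
  have := hC _ htC
  rw [hdescent] at this
  nlinarith [mul_pos (Set.mem_Ioi.1 ht) hpos]

lemma mem_hullPts_of_forall_xprod_le {S : Finset Pt} {o p q : Pt} (hq : q ∈ S) (hop : o ≠ p)
    (h : ∀ x ∈ S, xprod o p q ≤ xprod o p x) : q ∈ hullPts S := by
  have hhull : convexHull ℝ (S : Set Pt) ⊆ {x | xprod o p q ≤ xprod o p x} := by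
    refine convexHull_min h fun x hx y hy u v hu hv huv => ?_
    have hq' : xprod o p q = u * xprod o p q + v * xprod o p q := by
      rw [← add_mul, huv, one_mul]
    change _ ≤ xprod o p (u • x + v • y)
    rw [xprod_add_smul o p x y huv]
    nlinarith [mul_le_mul_of_nonneg_left (show _ ≤ xprod o p x from hx) hu,
      mul_le_mul_of_nonneg_left (show _ ≤ xprod o p y from hy) hv]
  exact ⟨hq, subset_closure (subset_convexHull ℝ _ hq),
    notMem_interior_of_forall_xprod_le hop hhull⟩

lemma mem_interior_of_xprod_pos {C : Set Pt} (hC : Convex ℝ C) {P₁ P₂ P₃ v : Pt}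
    (h₁ : P₁ ∈ C) (h₂ : P₂ ∈ C) (h₃ : P₃ ∈ C)
    (hv₁ : 0 < xprod P₁ P₂ v) (hv₂ : 0 < xprod P₂ P₃ v) (hv₃ : 0 < xprod P₃ P₁ v) :
    v ∈ interior C := by
  have hopen : ∀ P Q : Pt, IsOpen {x : Pt | 0 < xprod P Q x} := fun P Q =>
    isOpen_lt continuous_const (by unfold xprod; fun_prop)
  refine interior_maximal ?_ (((hopen _ _).inter (hopen _ _)).inter (hopen _ _))
    ⟨⟨hv₁, hv₂⟩, hv₃⟩
  rintro x ⟨⟨hx₁, hx₂⟩, hx₃⟩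
  -- barycentric coordinates of `x` with respect to the triangle
  set D := xprod P₂ P₃ x + xprod P₃ P₁ x + xprod P₁ P₂ x
  have hD : 0 < D := add_pos (add_pos hx₂ hx₃) hx₁
  convert hC.sum_mem (t := Finset.univ) (z := ![P₁, P₂, P₃])
    (w := ![xprod P₂ P₃ x / D, xprod P₃ P₁ x / D, xprod P₁ P₂ x / D]) ?_ ?_ ?_ using 1
  · simp only [Fin.sum_univ_three, Matrix.cons_val_zero, Matrix.cons_val_one,
      Matrix.cons_val_two, Matrix.tail_cons, Matrix.head_cons]
    ext <;> simp only [Prod.fst_add, Prod.snd_add, Prod.smul_fst, Prod.smul_snd,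
      smul_eq_mul] <;> field_simp <;> simp only [D, xprod] <;> ring
  · intro i _
    fin_cases i
    exacts [(div_pos hx₂ hD).le, (div_pos hx₃ hD).le, (div_pos hx₁ hD).le]
  · simp only [Fin.sum_univ_three, Matrix.cons_val_zero, Matrix.cons_val_one,
      Matrix.cons_val_two, Matrix.tail_cons, Matrix.head_cons]
    field_simp
    rfl
  · intro i _
    fin_cases i <;> simp [h₁, h₂, h₃]

lemma mem_interior_of_between {C : Set Pt} (hC : Convex ℝ C) {p q a b v : Pt}
    (hp : p ∈ C) (hq : q ∈ C) (ha : a ∈ C) (hb : b ∈ C)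
    (hpqv : xprod p q v < 0) (hpv : p.2 < v.2) (hvq : v.2 < q.2)
    (habv : 0 < xprod a b v) (hav : a.2 ≤ v.2) (hvb : v.2 ≤ b.2) : v ∈ interior C := by
  have hab : 0 < b.2 - a.2 := by
    refine sub_pos.2 (lt_of_le_of_ne (hav.trans hvb) fun h => ?_)
    have : v.2 = a.2 := by linarith
    simp [xprod, ← h, this] at habv
  -- `B` is the point of the chord `[a, b]` at the height of `v`
  set τ := (v.2 - a.2) / (b.2 - a.2)
  have hτ : τ * (b.2 - a.2) = v.2 - a.2 := div_mul_cancel₀ _ hab.ne'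
  have hτ₀ : 0 ≤ τ := div_nonneg (by linarith) hab.le
  have hτ₁ : τ ≤ 1 := (div_le_one hab).2 (by linarith)
  set B : Pt := (1 - τ) • a + τ • b
  have hB : B ∈ C := hC ha hb (by linarith) hτ₀ (by ring)
  have hBy : B.2 = v.2 := by
    simp only [B, Prod.snd_add, Prod.smul_snd, smul_eq_mul]
    linear_combination hτ
  have hBx : 0 < B.1 - v.1 := by
    have : (b.2 - a.2) * (B.1 - v.1) = xprod a b v := by
      simp only [B, xprod, Prod.fst_add, Prod.smul_fst, smul_eq_mul]
      linear_combination (b.1 - a.1) * hτ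
    exact pos_of_mul_pos_right (this ▸ habv) hab.le
  refine mem_interior_of_xprod_pos hC hq hp hB ?_ ?_ ?_
  · rw [xprod_swap]; linarith
  · have : xprod p B v = (v.2 - p.2) * (B.1 - v.1) := by
      simp only [xprod, hBy]; ring
    rw [this]; exact mul_pos (by linarith) hBx
  · have : xprod B q v = (q.2 - v.2) * (B.1 - v.1) := by
      simp only [xprod, hBy]; ring
    rw [this]; exact mul_pos (by linarith) hBx

lemma xprod_nonneg_of_mem_edgesOf {S : Finset Pt} {ps pt : Pt}
    (hs : IsLowest S ps) (ht : IsHighest S pt)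
    (hright : ∀ q ∈ S, q ≠ ps → q ≠ pt → xprod ps pt q < 0)
    {R : List Pt} (hRmono : MonoPath R) (hRmem : ∀ p : Pt, p ∈ R ↔ p ∈ hullPts S)
    {c d : Pt} (hf : (c, d) ∈ edgesOf R) {q : Pt} (hq : q ∈ S) : 0 ≤ xprod c d q := by
  by_contra! hneg
  have hcd : c.2 < d.2 := hRmono.snd_lt_of_mem_edgesOf hf
  have hcH := (hRmem c).1 (mem_of_mem_edgesOf hf).1
  have hdH := (hRmem d).1 (mem_of_mem_edgesOf hf).2
  have hhull := convex_convexHull ℝ (S : Set Pt)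
  have hmem : ∀ p ∈ S, p ∈ convexHull ℝ (S : Set Pt) := fun p hp => subset_convexHull ℝ _ hp
  obtain ⟨m, hmS, hmin⟩ := S.exists_min_image (xprod c d) ⟨q, hq⟩
  have hm : xprod c d m < 0 := (hmin q hq).trans_lt hneg
  have hmR : m ∈ R :=
    (hRmem m).2 (mem_hullPts_of_forall_xprod_le hmS (fun h => hcd.ne (by rw [h])) hmin)
  have hmc : m ≠ c := by rintro rfl; simp only [xprod] at hm; linarith
  have hmd : m ≠ d := by rintro rfl; simp only [xprod] at hm; linarith
  rcases hRmono.snd_lt_or_lt_of_mem_edgesOf hf hmR hmc hmd with hm' | hm'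
  · have hcps : c ≠ ps := by rintro rfl; linarith [hs.snd_le hmS]
    have hcpt : c ≠ pt := by rintro rfl; linarith [ht.snd_le hdH.1]
    refine hcH.2.2 (mem_interior_of_between hhull (hmem ps hs.1) (hmem pt ht.1) (hmem m hmS)
      (hmem d hdH.1) (hright c hcH.1 hcps hcpt) (by linarith [hs.snd_le hmS])
      (by linarith [ht.snd_le hdH.1]) ?_ hm'.le hcd.le)
    rw [← xprod_rotate, xprod_swap]; linarith
  · have hdps : d ≠ ps := by rintro rfl; linarith [hs.snd_le hcH.1]
    have hdpt : d ≠ pt := by rintro rfl; linarith [ht.snd_le hmS]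
    refine hdH.2.2 (mem_interior_of_between hhull (hmem ps hs.1) (hmem pt ht.1) (hmem c hcH.1)
      (hmem m hmS) (hright d hdH.1 hdps hdpt) (by linarith [hs.snd_le hcH.1])
      (by linarith [ht.snd_le hmS]) ?_ hcd.le hm'.le)
    rw [xprod_rotate, xprod_swap]; linarith

lemma segNC_lowest_highest {S : Finset Pt} {ps pt : Pt} (hs : IsLowest S ps) (ht : IsHighest S pt)
    (hright : ∀ q ∈ S, q ≠ ps → q ≠ pt → xprod ps pt q < 0)
    {c d : Pt} (hc : c ∈ S) (hd : d ∈ S) (hcd : c.2 < d.2) (hne : (ps, pt) ≠ (c, d)) :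
    SegNC (ps, pt) (c, d) := by
  have hside : ∀ q ∈ S, 0 ≤ xprod pt ps q ∧ (xprod pt ps q = 0 → q = ps ∨ q = pt) := by
    intro q hq
    rw [xprod_swap]
    by_cases hq' : q = ps ∨ q = pt
    · refine ⟨?_, fun _ => hq'⟩
      rcases hq' with rfl | rfl <;> simp only [xprod] <;> linarith
    · rw [not_or] at hq'
      have := hright q hq hq'.1 hq'.2
      exact ⟨by linarith, fun h => by linarith⟩
  intro x hx₁ hx₂
  have hx0 : xprod pt ps x = 0 := by
    rw [Seg, segment_symm] at hx₁
    exact xprod_eq_zero_of_mem_Seg hx₁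
  rcases eq_or_eq_or_mem_openSegment_of_mem_Seg hx₂ with rfl | rfl | hx₂'
  · exact ⟨(hside x hc).2 hx0, Or.inl rfl⟩
  · exact ⟨(hside x hd).2 hx0, Or.inr rfl⟩
  · obtain ⟨hc0, hd0⟩ :=
      xprod_eq_zero_of_mem_openSegment hx₂' (hside c hc).1 (hside d hd).1 hx0
    obtain ⟨rfl, rfl⟩ :=
      eq_and_eq_of_snd_lt (hs.snd_le ht.1) ((hside c hc).2 hc0) ((hside d hd).2 hd0) hcd
    exact absurd rfl hne

lemma segNC_of_mem_edgesOf_left_right {S : Finset Pt} {ps pt : Pt}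
    (hs : IsLowest S ps) (ht : IsHighest S pt)
    (hright : ∀ q ∈ S, q ≠ ps → q ≠ pt → xprod ps pt q < 0)
    {R : List Pt} (hRmono : MonoPath R) (hRmem : ∀ p : Pt, p ∈ R ↔ p ∈ hullPts S)
    {L : List Pt} (hLmono : MonoPath L) (hLS : ∀ p ∈ L, p ∈ S)
    (hLR : ∀ p ∈ L, p ∈ R → p = ps ∨ p = pt)
    {e f : Pt × Pt} (he : e ∈ edgesOf L) (hf : f ∈ edgesOf R) (hef : e ≠ f) : SegNC e f := by
  obtain ⟨a, b⟩ := e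
  obtain ⟨c, d⟩ := f
  have hab : a.2 < b.2 := hLmono.snd_lt_of_mem_edgesOf he
  have hcd : c.2 < d.2 := hRmono.snd_lt_of_mem_edgesOf hf
  have haS := hLS a (mem_of_mem_edgesOf he).1
  have hbS := hLS b (mem_of_mem_edgesOf he).2
  have hcS := ((hRmem c).1 (mem_of_mem_edgesOf hf).1).1
  have hdS := ((hRmem d).1 (mem_of_mem_edgesOf hf).2).1
  have hsupp : ∀ q ∈ S, 0 ≤ xprod c d q := fun q hq =>
    xprod_nonneg_of_mem_edgesOf hs ht hright hRmono hRmem hf hq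
  have hL0 : ∀ p ∈ L, xprod c d p = 0 → p = ps ∨ p = pt := fun p hp hp0 =>
    hLR p hp ((hRmem p).2 (mem_hullPts_of_forall_xprod_le (hLS p hp)
      (fun h => hcd.ne (by rw [h])) fun r hr => hp0 ▸ hsupp r hr))
  intro x hxab hxcd
  have hx0 : xprod c d x = 0 := xprod_eq_zero_of_mem_Seg hxcd
  have hext : x = ps ∨ x = pt → x = c ∨ x = d := by
    rintro (rfl | rfl)
    · exact eq_or_eq_of_mem_Seg hxcd hcd (Or.inl (hs.snd_le hcS))
    · exact eq_or_eq_of_mem_Seg hxcd hcd (Or.inr (ht.snd_le hdS))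
  rcases eq_or_eq_or_mem_openSegment_of_mem_Seg hxab with rfl | rfl | hxab'
  · exact ⟨Or.inl rfl, hext (hL0 x (mem_of_mem_edgesOf he).1 hx0)⟩
  · exact ⟨Or.inr rfl, hext (hL0 x (mem_of_mem_edgesOf he).2 hx0)⟩
  · obtain ⟨ha0, hb0⟩ :=
      xprod_eq_zero_of_mem_openSegment hxab' (hsupp a haS) (hsupp b hbS) hx0
    obtain ⟨rfl, rfl⟩ := eq_and_eq_of_snd_lt (hs.snd_le ht.1)
      (hL0 a (mem_of_mem_edgesOf he).1 ha0) (hL0 b (mem_of_mem_edgesOf he).2 hb0) hab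
    exact segNC_lowest_highest hs ht hright hcS hdS hcd hef x hxab hxcd

theorem stmt_15_general (S : Finset Pt)
    (ps pt : Pt) (hs : IsLowest S ps) (ht : IsHighest S pt)
    (hright : ∀ q ∈ S, q ≠ ps → q ≠ pt → xprod ps pt q < 0)
    (R : List Pt) (hRmono : MonoPath R) (hRnd : R.Nodup)
    (hRh : R.head? = some ps) (hRl : R.getLast? = some pt)
    (hRmem : ∀ p : Pt, p ∈ R ↔ p ∈ hullPts S)
    (L : List Pt) (hLmono : MonoPath L) (hLnd : L.Nodup)
    (hLh : L.head? = some ps) (hLl : L.getLast? = some pt)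
    (hLmem : ∀ p : Pt, p ∈ L ↔ (p = ps ∨ p = pt ∨ (p ∈ S ∧ p ∉ R))) :
    IsNCMonoHamCycle S ps pt L R := by
  have hLS : ∀ p ∈ L, p ∈ S := fun p hp => by
    rcases (hLmem p).1 hp with rfl | rfl | hp
    exacts [hs.1, ht.1, hp.1]
  have hLR : ∀ p ∈ L, p ∈ R → p = ps ∨ p = pt := fun p hpL hpR => by
    rcases (hLmem p).1 hpL with h | h | h
    exacts [Or.inl h, Or.inr h, absurd hpR h.2]
  refine ⟨hLmono, hRmono, hLh, hRh, hLl, hRl, hLnd, hRnd, fun p => ⟨fun hp => ?_, ?_⟩, hLR, ?_⟩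
  · by_cases hpR : p ∈ R
    · exact Or.inr hpR
    · exact Or.inl ((hLmem p).2 (Or.inr (Or.inr ⟨hp, hpR⟩)))
  · rintro (hp | hp)
    exacts [hLS p hp, ((hRmem p).1 hp).1]
  · intro e he f hf hef
    rcases List.mem_append.1 he with heL | heR <;> rcases List.mem_append.1 hf with hfL | hfR
    · exact hLmono.segNC heL hfL hef
    · exact segNC_of_mem_edgesOf_left_right hs ht hright hRmono hRmem hLmono hLS hLR heL hfR hef
    · exact (segNC_of_mem_edgesOf_left_right hs ht hright hRmono hRmem hLmono hLS hLR hfL heR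
        hef.symm).symm
    · exact hRmono.segNC heR hfR hef

/-- if all points of `S` other than the extremes lie strictly to
the right of the line through the extremes, then the right-envelope path `R`
together with the monotone path `L` through the remaining points forms a
non-crossing monotone Hamiltonian cycle on `S`. -/
theorem stmt_15 (S : Finset Pt) (hy : DistinctY S)
    (ps pt : Pt) (hs : IsLowest S ps) (ht : IsHighest S pt)
    (hright : ∀ q ∈ S, q ≠ ps → q ≠ pt → xprod ps pt q < 0)
    (R : List Pt) (hRmono : MonoPath R) (hRnd : R.Nodup)
    (hRh : R.head? = some ps) (hRl : R.getLast? = some pt)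
    (hRmem : ∀ p : Pt, p ∈ R ↔ p ∈ hullPts S)
    (L : List Pt) (hLmono : MonoPath L) (hLnd : L.Nodup)
    (hLh : L.head? = some ps) (hLl : L.getLast? = some pt)
    (hLmem : ∀ p : Pt, p ∈ L ↔ (p = ps ∨ p = pt ∨ (p ∈ S ∧ p ∉ R))) :
    IsNCMonoHamCycle S ps pt L R :=
  stmt_15_general S ps pt hs ht hright R hRmono hRnd hRh hRl hRmem L hLmono hLnd hLh hLl hLmem
end
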